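/- arXiv:math/0309104 — 6 statements merged into one kernel-verified Lean document; each statement's English description precedes it below -/
import Mathlib

section
/- Let G be a finite 2-group admitting an Iwasawa structure (A, t) of level s, i.e., A is a normal abelian subgroup, G is generated by A and t, and t·a·t⁻¹ = a^(1+2^s) for every a ∈ A. Then the commutator subgroup [G,G] equals A^(2^s), the subgroup generated by 2^s-th powers of elements of A. -/
/-- An Iwasawa structure of level `s` on a group `G`: a normal abelian subgroup `A`
together with an element `t` such that `G = ⟨A, t⟩` and `t a t⁻¹ = a ^ (1 + 2 ^ s)`
for every `a ∈ A`. -/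
def IsIwasawaStructure {G : Type*} [Group G] (A : Subgroup G) (t : G) (s : ℕ) : Prop :=
  A.Normal ∧ (∀ a ∈ A, ∀ b ∈ A, a * b = b * a) ∧
    Subgroup.closure ((A : Set G) ∪ {t}) = ⊤ ∧
    ∀ a ∈ A, t * a * t⁻¹ = a ^ (1 + 2 ^ s)

/-!
From `t a t⁻¹ = a ^ (1 + 2 ^ s)` one gets `⁅t, a⁆ = a ^ 2 ^ s`, so every generator of
`B = ⟨a ^ 2 ^ s | a ∈ A⟩` is a commutator. Conversely `B` is normal, since its generating set
is stable under conjugation (`A` being normal), and modulo `B` the generators `A ∪ {t}` of `G`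
commute pairwise; hence `G ⧸ B` is abelian and `[G, G] ≤ B`.
-/

open scoped commutatorElement

section

variable {G : Type*} [Group G]

namespace Subgroup

theorem closure_normal_of_conj_mem {s : Set G} (hs : ∀ g : G, ∀ x ∈ s, g * x * g⁻¹ ∈ s) :
    (closure s).Normal := by
  have hle : normalClosure s ≤ closure s := closure_mono fun x hx => by
    obtain ⟨a, ha, hax⟩ := Group.mem_conjugatesOfSet_iff.1 hx
    obtain ⟨g, rfl⟩ := isConj_iff.1 hax
    exact hs g a ha
  rw [le_antisymm closure_le_normalClosure hle]
  infer_instance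

theorem Normal.closure_pow_image_normal {A : Subgroup G} (hA : A.Normal) (n : ℕ) :
    (closure ((· ^ n) '' (A : Set G))).Normal :=
  closure_normal_of_conj_mem fun g _ ⟨a, ha, hax⟩ =>
    ⟨g * a * g⁻¹, hA.conj_mem a ha g, by rw [← hax]; exact conj_pow⟩

end Subgroup

open Subgroup in
theorem commutator_le_of_closure_eq_top {S : Set G} (hS : closure S = ⊤) (N : Subgroup G)
    [N.Normal] (h : ∀ x ∈ S, ∀ y ∈ S, ⁅x, y⁆ ∈ N) : commutator G ≤ N := by
  let f := QuotientGroup.mk' N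
  have hmem_iff : ∀ x y : G, ⁅x, y⁆ ∈ N ↔ f x * f y = f y * f x := fun x y => by
    rw [← commutatorElement_eq_one_iff_mul_comm, ← map_commutatorElement,
      ← MonoidHom.mem_ker, QuotientGroup.ker_mk']
  have hcomm : ∀ x ∈ f '' S, ∀ y ∈ f '' S, x * y = y * x := by
    rintro _ ⟨x, hx, rfl⟩ _ ⟨y, hy, rfl⟩
    exact (hmem_iff x y).1 (h x hx y hy)
  have htop : closure (f '' S) = ⊤ := by
    rw [← MonoidHom.map_closure, hS, map_top_of_surjective f (QuotientGroup.mk'_surjective N)]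
  have hcentral : ⊤ ≤ centralizer ((⊤ : Subgroup (G ⧸ N)) : Set (G ⧸ N)) := by
    rw [le_centralizer_iff_isMulCommutative, ← htop]
    exact isMulCommutative_closure hcomm
  rw [commutator_def, commutator_le]
  intro x _ y _
  exact (hmem_iff x y).2 (mem_centralizer_iff.1 (hcentral (mem_top (f y))) (f x) (mem_top _))

theorem commutatorElement_eq_pow_of_conj_eq_pow {t a : G} {n : ℕ}
    (h : t * a * t⁻¹ = a ^ (1 + n)) : ⁅t, a⁆ = a ^ n := by
  rw [commutatorElement_def, h, add_comm, pow_succ, mul_inv_cancel_right]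

end

open Subgroup in
theorem commutator_eq_pow_of_isIwasawaStructure_general {G : Type*} [Group G]
    (A : Subgroup G) (t : G) (s : ℕ)
    (h : IsIwasawaStructure A t s) :
    commutator G = Subgroup.closure ((· ^ (2 ^ s)) '' (A : Set G)) := by
  obtain ⟨hA, hcomm, hgen, hconj⟩ := h
  have ht : ∀ a ∈ A, ⁅t, a⁆ = a ^ 2 ^ s := fun a ha =>
    commutatorElement_eq_pow_of_conj_eq_pow (hconj a ha)
  have := hA.closure_pow_image_normal (2 ^ s)
  apply le_antisymm
  · refine commutator_le_of_closure_eq_top hgen _ ?_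
    rintro x (hx | rfl) y (hy | rfl)
    · rw [commutatorElement_eq_one_iff_mul_comm.2 (hcomm x hx y hy)]
      exact one_mem _
    · rw [← commutatorElement_inv, ht x hx]
      exact inv_mem (subset_closure ⟨x, hx, rfl⟩)
    · rw [ht y hy]
      exact subset_closure ⟨y, hy, rfl⟩
    · rw [commutatorElement_self]
      exact one_mem _
  · rw [closure_le]
    rintro _ ⟨a, ha, rfl⟩
    show a ^ 2 ^ s ∈ commutator G
    rw [← ht a ha, commutator_def]
    exact commutator_mem_commutator (mem_top t) (mem_top a)

/-- If a finite 2-group `G` admits an Iwasawa structure `(A, t)` of level `s ≥ 1`, then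
the commutator subgroup `[G, G]` equals `A ^ (2 ^ s)`, the subgroup generated by the
`2 ^ s`-th powers of elements of `A`. -/
theorem commutator_eq_pow_of_isIwasawaStructure {G : Type*} [Group G] [Finite G]
    (hG : IsPGroup 2 G) (A : Subgroup G) (t : G) (s : ℕ) (hs : 1 ≤ s)
    (h : IsIwasawaStructure A t s) :
    commutator G = Subgroup.closure ((· ^ (2 ^ s)) '' (A : Set G)) :=
  commutator_eq_pow_of_isIwasawaStructure_general A t s h
end

section
/- Let G = ⟨a, t | a^(2^5) = 1, a^(2^2) = t^(2^3), tat⁻¹ = a^9⟩. Then G is a group of order 2^8, its commutator subgroup [G,G] = ⟨a^8⟩ is contained in G^16 but not in G^32, and hence G/G^16 is abelian while G/G^32 is not. -/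
/-- The subgroup of `G` generated by all `n`-th powers. -/
def powSubgroup (G : Type*) [Group G] (n : ℕ) : Subgroup G :=
  Subgroup.closure {x : G | ∃ g : G, g ^ n = x}

/-- Relators for `G = ⟨a, t ∣ a ^ 2⁵ = 1, a ^ 2² = t ^ 2³, t a t⁻¹ = a ^ 9⟩`,
with `a` the generator `0` and `t` the generator `1`. -/
def exampleRels : Set (FreeGroup (Fin 2)) :=
  { FreeGroup.of 0 ^ (2 ^ 5),
    FreeGroup.of 0 ^ (2 ^ 2) * (FreeGroup.of 1 ^ (2 ^ 3))⁻¹,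
    FreeGroup.of 1 * FreeGroup.of 0 * (FreeGroup.of 1)⁻¹ * (FreeGroup.of 0 ^ 9)⁻¹ }

/-!
Every element of `G` can be written as `a ^ i * t ^ j` with `i < 32` and `j < 8`, because
`t a t⁻¹ = a ^ 9` lets one move powers of `t` to the right and `t ^ 8 = a ^ 4`. These `256` words
are pairwise distinct: `a ↦ (x ↦ x + 2)`, `t ↦ (x ↦ 9 x + 5)` is a representation of `G` by affine
maps of `ℤ/64` that separates them. Hence `|G| = 2 ^ 8` and `a` has order `32`.

The commutator `[t, a] = a ^ 8` lies in `[G, G]`, and the map `G → ℤ/4 × ℤ/16`,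
`a ↦ (1, 2)`, `t ↦ (0, 1)` kills `[G, G]` and nothing but `⟨a ^ 8⟩` among the normal forms, so
`[G, G] = ⟨a ^ 8⟩`. Since `a ^ 8 = t ^ 16` it lies in `G ^ 16`. On the other hand
`(a ^ i t ^ j) ^ 32 = a ^ (16 j)`, so `G ^ 32 ≤ ⟨a ^ 16⟩`, which does not contain `a ^ 8`.
-/

theorem affineMatrix_pow {R : Type*} [CommSemiring R] (u v : R) (n : ℕ) :
    !![u, v; 0, 1] ^ n = !![u ^ n, v * ∑ k ∈ Finset.range n, u ^ k; 0, 1] := by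
  induction n with
  | zero => simp [Matrix.one_fin_two]
  | succ n ih =>
    rw [pow_succ, ih, Matrix.mul_fin_two, Finset.sum_range_succ, pow_succ u, mul_add]
    simp only [mul_zero, add_zero, mul_one, zero_mul, zero_add, mul_comm (u ^ n) v, add_comm]

theorem lift_exampleRels_eq_one {H : Type*} [Group H] {x y : H} (h32 : x ^ 32 = 1)
    (h4 : x ^ 4 = y ^ 8) (h9 : y * x = x ^ 9 * y) :
    ∀ r ∈ exampleRels, FreeGroup.lift ![x, y] r = 1 := by
  simp only [exampleRels, Set.mem_insert_iff, Set.mem_singleton_iff, forall_eq_or_imp, forall_eq]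
  simp [h32, h4, h9]

namespace IwasawaExample

open scoped commutatorElement

local notation "G" => PresentedGroup exampleRels
local notation "a" => (PresentedGroup.of 0 : G)
local notation "t" => (PresentedGroup.of 1 : G)

theorem a_pow_32 : a ^ 32 = 1 := by
  have h := PresentedGroup.one_of_mem (rels := exampleRels) (Set.mem_insert _ _)
  rwa [map_pow] at h

theorem a_pow_4 : a ^ 4 = t ^ 8 := by
  have h := PresentedGroup.mk_eq_mk_of_mul_inv_mem (rels := exampleRels)
    (Set.mem_insert_of_mem _ (Set.mem_insert _ _))
  rwa [map_pow, map_pow] at h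

theorem t_mul_a : t * a = a ^ 9 * t := by
  have h := PresentedGroup.mk_eq_mk_of_mul_inv_mem (rels := exampleRels)
    (Set.mem_insert_of_mem _ (Set.mem_insert_of_mem _ rfl))
  rwa [map_mul, map_mul, map_inv, map_pow, mul_inv_eq_iff_eq_mul] at h

theorem t_mul_a_pow (k : ℕ) : t * a ^ k = a ^ (9 * k) * t := by
  rw [pow_mul]
  exact (SemiconjBy.pow_right t_mul_a k :)

theorem t_pow_mul_a_pow (j k : ℕ) : t ^ j * a ^ k = a ^ (9 ^ j * k) * t ^ j := by
  induction j generalizing k with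
  | zero => simp
  | succ j ih =>
    rw [pow_succ, mul_assoc, t_mul_a_pow, ← mul_assoc, ih, mul_assoc, pow_succ 9, mul_assoc]

theorem t_pow_16 : t ^ 16 = a ^ 8 := by
  rw [show 16 = 8 * 2 from rfl, pow_mul, ← a_pow_4, ← pow_mul]

theorem a_pow_8_eq_commutatorElement : a ^ 8 = ⁅t, a⁆ := by
  rw [commutatorElement_def, t_mul_a]
  group

theorem a_pow_mul_t_pow_pow (i j n : ℕ) :
    (a ^ i * t ^ j) ^ n = a ^ (i * ∑ k ∈ Finset.range n, (9 ^ j) ^ k) * t ^ (j * n) := by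
  induction n with
  | zero => simp
  | succ n ih =>
    rw [pow_succ, ih, mul_assoc, ← mul_assoc (t ^ (j * n)), t_pow_mul_a_pow, Finset.sum_range_succ,
      ← pow_mul, mul_add, pow_add, mul_add, mul_one, pow_add, mul_comm (9 ^ (j * n)) i]
    simp only [mul_assoc]

def normalForms : Submonoid G where
  carrier := {g | ∃ i j : ℕ, g = a ^ i * t ^ j}
  mul_mem' := by
    rintro _ _ ⟨i, j, rfl⟩ ⟨k, l, rfl⟩
    refine ⟨i + 9 ^ j * k, j + l, ?_⟩
    rw [mul_assoc, ← mul_assoc (t ^ j), t_pow_mul_a_pow, pow_add, pow_add]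
    simp only [mul_assoc]
  one_mem' := ⟨0, 0, by simp⟩

theorem mem_normalForms (g : G) : g ∈ normalForms := by
  have hg : g ∈ (Subgroup.closure (Set.range PresentedGroup.of)).toSubmonoid := by
    rw [PresentedGroup.closure_range_of]; trivial
  rw [Subgroup.closure_toSubmonoid] at hg
  refine Submonoid.closure_le.mpr ?_ hg
  rintro g (⟨x, rfl⟩ | ⟨x, hx⟩)
  · fin_cases x
    · exact ⟨1, 0, by simp⟩
    · exact ⟨0, 1, by simp⟩
  · obtain rfl : g = (PresentedGroup.of x)⁻¹ := by rw [hx, inv_inv]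
    have ha : a⁻¹ = a ^ 31 * t ^ 0 := by
      rw [pow_zero, mul_one]
      exact inv_eq_of_mul_eq_one_right (by rw [← pow_succ', a_pow_32])
    have ht : t⁻¹ = a ^ 28 * t ^ 7 :=
      inv_eq_of_mul_eq_one_left (by rw [mul_assoc, ← pow_succ, ← a_pow_4, ← pow_add, a_pow_32])
    fin_cases x
    exacts [⟨31, 0, ha⟩, ⟨28, 7, ht⟩]

def normalForm (p : Fin 32 × Fin 8) : G := a ^ (p.1 : ℕ) * t ^ (p.2 : ℕ)

theorem normalForm_surjective : Function.Surjective normalForm := by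
  intro g
  obtain ⟨i, j, rfl⟩ := mem_normalForms g
  refine ⟨(Fin.ofNat 32 (i + 4 * (j / 8)), Fin.ofNat 8 j), ?_⟩
  have ht : t ^ j = a ^ (4 * (j / 8)) * t ^ (j % 8) := by
    conv_lhs => rw [← Nat.div_add_mod j 8, pow_add, pow_mul, ← a_pow_4, ← pow_mul]
  rw [normalForm, Fin.val_ofNat, Fin.val_ofNat, ← pow_eq_pow_mod _ a_pow_32, ht, pow_add, mul_assoc]

def matA : GL (Fin 2) (ZMod 64) := ⟨!![1, 2; 0, 1], !![1, 62; 0, 1], by decide, by decide⟩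

def matT : GL (Fin 2) (ZMod 64) := ⟨!![9, 5; 0, 1], !![57, 35; 0, 1], by decide, by decide⟩

set_option maxRecDepth 40000 in
noncomputable def rep : G →* GL (Fin 2) (ZMod 64) :=
  PresentedGroup.toGroup <| lift_exampleRels_eq_one (x := matA) (y := matT)
    (Units.ext (by decide)) (Units.ext (by decide)) (Units.ext (by decide))

theorem rep_normalForm (p : Fin 32 × Fin 8) :
    (rep (normalForm p) : Matrix (Fin 2) (Fin 2) (ZMod 64)) =
      !![9 ^ (p.2 : ℕ), 5 * ∑ k ∈ Finset.range p.2, 9 ^ k + 2 * ((p.1 : ℕ) : ZMod 64); 0, 1] := by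
  rw [normalForm, map_mul, map_pow, map_pow, rep, PresentedGroup.toGroup.of,
    PresentedGroup.toGroup.of, Units.val_mul, Units.val_pow_eq_pow_val, Units.val_pow_eq_pow_val]
  simp only [Matrix.cons_val_zero, Matrix.cons_val_one, matA, matT]
  rw [affineMatrix_pow, affineMatrix_pow, Matrix.mul_fin_two]
  simp only [one_pow, one_mul, Finset.sum_const, Finset.card_range, nsmul_eq_mul, mul_one, mul_zero,
    add_zero, zero_mul, zero_add]

theorem orderOf_nine : orderOf (9 : ZMod 64) = 2 ^ 3 :=
  orderOf_eq_prime_pow (by decide) (by decide)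

theorem rep_comp_normalForm_injective : Function.Injective (rep ∘ normalForm) := by
  intro p q h
  have hpq := congrArg Units.val h
  simp only [Function.comp_apply, rep_normalForm] at hpq
  have h00 := congrFun (congrFun hpq 0) 0
  have h01 := congrFun (congrFun hpq 0) 1
  simp only [Matrix.of_apply, Matrix.cons_val', Matrix.cons_val_zero, Matrix.cons_val_one,
    Matrix.empty_val', Matrix.cons_val_fin_one] at h00 h01
  have hj : p.2 = q.2 := by
    refine Fin.ext (pow_injOn_Iio_orderOf ?_ ?_ h00) <;> rw [orderOf_nine, Set.mem_Iio]
    exacts [p.2.isLt, q.2.isLt]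
  rw [hj, add_right_inj] at h01
  have h2i : ((2 * p.1 : ℕ) : ZMod 64) = ((2 * q.1 : ℕ) : ZMod 64) := by push_cast; exact h01
  rw [ZMod.natCast_eq_natCast_iff'] at h2i
  exact Prod.ext (Fin.ext (by omega)) hj

theorem normalForm_bijective : Function.Bijective normalForm :=
  ⟨rep_comp_normalForm_injective.of_comp, normalForm_surjective⟩

theorem card_eq : Nat.card G = 2 ^ 8 := by
  rw [← Nat.card_eq_of_bijective normalForm normalForm_bijective]
  simp

theorem orderOf_a : orderOf a = 2 ^ 5 := by
  refine orderOf_eq_prime_pow (fun h16 => ?_) a_pow_32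
  have h := normalForm_bijective.1 (a₁ := (16, 0)) (a₂ := (0, 0)) (by simpa [normalForm] using h16)
  exact absurd h (by decide)

noncomputable def abelianMap : G →* Multiplicative (ZMod 4 × ZMod 16) :=
  PresentedGroup.toGroup <| lift_exampleRels_eq_one (x := .ofAdd (1, 2)) (y := .ofAdd (0, 1))
    (by decide) (by decide) (by decide)

theorem abelianMap_normalForm (p : Fin 32 × Fin 8) :
    abelianMap (normalForm p) =
      .ofAdd (((p.1 : ℕ) : ZMod 4), 2 * ((p.1 : ℕ) : ZMod 16) + (p.2 : ℕ)) := by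
  rw [normalForm, map_mul, map_pow, map_pow, abelianMap, PresentedGroup.toGroup.of,
    PresentedGroup.toGroup.of]
  simp [← ofAdd_nsmul, ← ofAdd_add, mul_comm]

set_option maxRecDepth 10000 in
theorem normalForm_mem_ker_abelianMap {p : Fin 32 × Fin 8} (hp : normalForm p ∈ abelianMap.ker) :
    8 ∣ (p.1 : ℕ) ∧ (p.2 : ℕ) = 0 := by
  rw [MonoidHom.mem_ker, abelianMap_normalForm] at hp
  revert p
  decide

theorem commutator_eq_zpowers : commutator G = Subgroup.zpowers (a ^ 8) := by
  refine le_antisymm (fun g hg => ?_) ?_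
  · obtain ⟨p, rfl⟩ := normalForm_surjective g
    obtain ⟨⟨m, hm⟩, hp2⟩ :=
      normalForm_mem_ker_abelianMap (Abelianization.commutator_subset_ker abelianMap hg)
    exact ⟨m, by simp [normalForm, hm, hp2, pow_mul]⟩
  · rw [Subgroup.zpowers_le, a_pow_8_eq_commutatorElement, commutator_def]
    exact Subgroup.commutator_mem_commutator (Subgroup.mem_top _) (Subgroup.mem_top _)

theorem sum_range_32_pow_nine_pow (j : Fin 8) :
    ∑ k ∈ Finset.range 32, ((9 : ZMod 32) ^ (j : ℕ)) ^ k = 0 := by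
  revert j
  decide

theorem pow_32_mem_zpowers (g : G) : g ^ 32 ∈ Subgroup.zpowers (a ^ 16) := by
  obtain ⟨⟨i, j⟩, rfl⟩ := normalForm_surjective g
  have ha : a ^ ((i : ℕ) * ∑ k ∈ Finset.range 32, (9 ^ (j : ℕ)) ^ k) = 1 := by
    refine orderOf_dvd_iff_pow_eq_one.mp (Dvd.dvd.mul_left ?_ _)
    rw [orderOf_a, ← ZMod.natCast_eq_zero_iff]
    push_cast
    exact sum_range_32_pow_nine_pow j
  have ht : t ^ ((j : ℕ) * 32) = (a ^ 16) ^ (j : ℕ) := by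
    rw [show (j : ℕ) * 32 = 16 * (2 * j) by ring, pow_mul, t_pow_16, ← pow_mul, ← pow_mul,
      show 8 * (2 * (j : ℕ)) = 16 * j by ring]
  rw [normalForm, a_pow_mul_t_pow_pow, ha, one_mul, ht]
  exact Subgroup.npow_mem_zpowers _ _

theorem powSubgroup_32_le_zpowers : powSubgroup G 32 ≤ Subgroup.zpowers (a ^ 16) := by
  rw [powSubgroup, Subgroup.closure_le]
  rintro _ ⟨g, rfl⟩
  exact pow_32_mem_zpowers g

theorem a_pow_8_not_mem_powSubgroup_32 : a ^ 8 ∉ powSubgroup G 32 := by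
  intro h8
  have hdvd := orderOf_dvd_of_mem_zpowers (powSubgroup_32_le_zpowers h8)
  rw [orderOf_pow_of_dvd (by norm_num) (by rw [orderOf_a]; norm_num),
    orderOf_pow_of_dvd (by norm_num) (by rw [orderOf_a]; norm_num), orderOf_a] at hdvd
  norm_num at hdvd

end IwasawaExample

/-- Let `G = ⟨a, t ∣ a ^ 2⁵ = 1, a ^ 2² = t ^ 2³, t a t⁻¹ = a ^ 9⟩`.  Then `G` has order
`2 ^ 8`, its commutator subgroup is `⟨a ^ 8⟩`, which is contained in `G ^ 16` but not in
`G ^ 32`; hence `G / G ^ 16` is abelian while `G / G ^ 32` is not. -/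
theorem example_iwasawa_group_strength :
    Nat.card (PresentedGroup exampleRels) = 2 ^ 8 ∧
    commutator (PresentedGroup exampleRels) =
      Subgroup.zpowers ((PresentedGroup.of 0 : PresentedGroup exampleRels) ^ 8) ∧
    commutator (PresentedGroup exampleRels) ≤ powSubgroup (PresentedGroup exampleRels) 16 ∧
    ¬ commutator (PresentedGroup exampleRels) ≤ powSubgroup (PresentedGroup exampleRels) 32 := by
  refine ⟨IwasawaExample.card_eq, IwasawaExample.commutator_eq_zpowers, ?_, ?_⟩
  · rw [IwasawaExample.commutator_eq_zpowers, Subgroup.zpowers_le, ← IwasawaExample.t_pow_16]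
    exact Subgroup.subset_closure ⟨_, rfl⟩
  · rw [IwasawaExample.commutator_eq_zpowers, Subgroup.zpowers_le]
    exact IwasawaExample.a_pow_8_not_mem_powSubgroup_32
end

section
/- Let G be a non-abelian finite 2-group admitting an Iwasawa structure (A,t) of level s, and suppose the strength m of G (the maximum m with G/G^(2^m) abelian) is strictly greater than s, with s ≥ 2. Then G also admits an Iwasawa structure of level m. -/
/-!
Write `τ = t ^ 2 ^ m`. Since `t` acts on the abelian group `A` by an odd power, every `2 ^ m`-th
power in `G = A⟨t⟩` has the form `c ^ 2 ^ m * τ ^ j` with `c ∈ A`. The commutators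
`⁅t, a⁆ = a ^ 2 ^ s` lie in `G' ≤ G ^ 2 ^ m`, so each `a ^ 2 ^ s` is the square of another such
element times a power of `τ`; as `G` is a finite 2-group, this descent ends with `a ^ 2 ^ s ∈ ⟨τ⟩`.
Hence `A` has exponent dividing `2 ^ (2 * s)` and `t ^ k` acts on `A` as `a ↦ a ^ (1 + 2 ^ s * k)`.
These commutators generate `G'` modulo any normal subgroup containing them, so maximality of `m`
gives `a ∈ A` with `a ^ 2 ^ s` an odd power of `τ`, hence `b ∈ A` with `b ^ 2 ^ s = τ⁻¹`. The new
structure is `(Ω ⊔ ⟨t⟩, b)` with `Ω = A ⊓ Z(G)`, the elements of `A` killed by `2 ^ s`: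
conjugation by `b` fixes `Ω` and sends `t ^ k` to `τ ^ k * t ^ k`, and every `a ∈ A` is an element
of `Ω` times a power of `b`.
-/

section

open Subgroup

open scoped commutatorElement

variable {G : Type*} [Group G]

instance powSubgroup_characteristic (n : ℕ) : (powSubgroup G n).Characteristic := by
  refine characteristic_iff_map_le.mpr fun ϕ => ?_
  rw [powSubgroup, MonoidHom.map_closure]
  refine closure_mono ?_
  rintro _ ⟨_, ⟨g, rfl⟩, rfl⟩
  exact ⟨ϕ g, (map_pow ϕ g n).symm⟩

theorem exists_mem_eq_mul_pow_of_mem_sup_zpowers [Finite G] {N : Subgroup G} [N.Normal] {t x : G}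
    (hx : x ∈ N ⊔ zpowers t) : ∃ a ∈ N, ∃ n : ℕ, x = a * t ^ n := by
  rw [← SetLike.mem_coe, normal_mul] at hx
  obtain ⟨a, ha, y, hy, rfl⟩ := hx
  obtain ⟨n, rfl⟩ := mem_powers_iff_mem_zpowers.mpr hy
  exact ⟨a, ha, n, rfl⟩

theorem exists_mem_eq_mul_pow_of_closure_eq_top [Finite G] {A : Subgroup G} [A.Normal] {t : G}
    (hcl : closure ((A : Set G) ∪ {t}) = ⊤) (g : G) : ∃ a ∈ A, ∃ n : ℕ, g = a * t ^ n := by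
  refine exists_mem_eq_mul_pow_of_mem_sup_zpowers ?_
  rw [zpowers_eq_closure, ← closure_eq A, ← Subgroup.closure_union, hcl]
  exact mem_top g

theorem IsPGroup.mem_zpowers_zpow_of_odd (hG : IsPGroup 2 G) (g : G) {j : ℤ} (hj : Odd j) :
    g ∈ zpowers (g ^ j) := by
  obtain ⟨e, he⟩ := IsPGroup.iff_orderOf.mp hG g
  rw [mem_zpowers_zpow_iff, he, ← Int.isCoprime_iff_gcd_eq_one, Nat.cast_pow, Nat.cast_ofNat]
  exact (Int.isCoprime_two_right.mpr hj).pow_right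

theorem IsPGroup.pow_two_pow_mem_zpowers_of_not_mem_powSubgroup (hG : IsPGroup 2 G) {g y : G}
    {n : ℕ} (hy : y ∈ zpowers (g ^ 2 ^ n)) (hy' : y ∉ powSubgroup G (2 ^ (n + 1))) :
    g ^ 2 ^ n ∈ zpowers y := by
  obtain ⟨i, rfl⟩ := mem_zpowers_iff.mp hy
  rcases Int.even_or_odd i with ⟨k, rfl⟩ | hi
  · refine absurd ?_ hy'
    rw [← two_mul, zpow_mul, zpow_two, ← sq, ← pow_mul, ← pow_succ]
    exact zpow_mem (show g ^ 2 ^ (n + 1) ∈ powSubgroup G (2 ^ (n + 1)) from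
      Subgroup.subset_closure ⟨g, rfl⟩) k
  · exact hG.mem_zpowers_zpow_of_odd _ hi

theorem pow_mem_of_forall_pow_eq_sq_mul [Finite G] (hG : IsPGroup 2 G) {A Z : Subgroup G}
    (hA : ∀ a ∈ A, ∀ b ∈ A, a * b = b * a) {n : ℕ}
    (h : ∀ a ∈ A, ∃ c ∈ A, ∃ z ∈ Z, a ^ n = (c ^ n) ^ 2 * z) {a : G} (ha : a ∈ A) :
    a ^ n ∈ Z := by
  have key : ∀ j : ℕ, ∃ c ∈ A, ∃ z ∈ Z, a ^ n = (c ^ n) ^ 2 ^ j * z := by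
    intro j
    induction j with
    | zero => exact ⟨a, ha, 1, Z.one_mem, by simp⟩
    | succ j ih =>
      obtain ⟨c, hc, z, hz, hcz⟩ := ih
      obtain ⟨d, hd, w, hw, hdw⟩ := h c hc
      have hwA : w ∈ A := by
        rw [eq_inv_mul_of_mul_eq hdw.symm]
        exact A.mul_mem (A.inv_mem (A.pow_mem (A.pow_mem hd n) 2)) (A.pow_mem hc n)
      refine ⟨d, hd, w ^ 2 ^ j * z, Z.mul_mem (Z.pow_mem hw _) hz, ?_⟩
      rw [hcz, hdw, Commute.mul_pow (hA _ (A.pow_mem (A.pow_mem hd n) 2) w hwA), pow_succ' 2 j,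
        pow_mul, mul_assoc]
  obtain ⟨E, hE⟩ := hG.exists_card_eq
  obtain ⟨c, -, z, hz, hcz⟩ := key E
  rwa [hcz, ← hE, pow_card_eq_one', one_mul]

variable {A : Subgroup G} {t : G}

theorem pow_mul_mul_inv_pow_eq_pow_pow {r : ℕ} (hconj : ∀ a ∈ A, t * a * t⁻¹ = a ^ r) {a : G}
    (ha : a ∈ A) (n : ℕ) : t ^ n * a * (t ^ n)⁻¹ = a ^ r ^ n := by
  induction n with
  | zero => simp
  | succ n ih =>
    calc t ^ (n + 1) * a * (t ^ (n + 1))⁻¹ = t * (t ^ n * a * (t ^ n)⁻¹) * t⁻¹ := by group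
      _ = a ^ r ^ (n + 1) := by rw [ih, ← conj_pow, hconj a ha, ← pow_mul, pow_succ']

theorem exists_mul_pow_two_pow_eq {r : ℕ} (hconj : ∀ a ∈ A, t * a * t⁻¹ = a ^ r) (hr : Odd r)
    {a : G} (ha : a ∈ A) (n k : ℕ) :
    ∃ c ∈ A, (a * t ^ n) ^ 2 ^ k = c ^ 2 ^ k * t ^ (2 ^ k * n) := by
  induction k with
  | zero => exact ⟨a, ha, by simp⟩
  | succ k ih =>
    obtain ⟨c, hc, hck⟩ := ih
    obtain ⟨u, hu⟩ := hr.pow (n := 2 ^ k * n)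
    refine ⟨c ^ (u + 1), A.pow_mem hc _, ?_⟩
    calc (a * t ^ n) ^ 2 ^ (k + 1)
        = c ^ 2 ^ k * (t ^ (2 ^ k * n) * c ^ 2 ^ k * (t ^ (2 ^ k * n))⁻¹) *
            (t ^ (2 ^ k * n) * t ^ (2 ^ k * n)) := by rw [pow_succ, pow_mul, hck, sq]; group
      _ = (c ^ (u + 1)) ^ 2 ^ (k + 1) * t ^ (2 ^ (k + 1) * n) := by
        rw [← conj_pow, pow_mul_mul_inv_pow_eq_pow_pow hconj hc, hu, ← pow_mul, ← pow_add,
          ← pow_mul, ← pow_add]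
        congr 2 <;> ring

theorem exists_eq_pow_mul_of_mem_powSubgroup [Finite G] [A.Normal]
    (hA : ∀ a ∈ A, ∀ b ∈ A, a * b = b * a) (hcl : closure ((A : Set G) ∪ {t}) = ⊤) {r : ℕ}
    (hconj : ∀ a ∈ A, t * a * t⁻¹ = a ^ r) (hr : Odd r) (k : ℕ) {x : G}
    (hx : x ∈ powSubgroup G (2 ^ k)) : ∃ c ∈ A, ∃ z ∈ zpowers (t ^ 2 ^ k), x = c ^ 2 ^ k * z := by
  induction hx using closure_induction with
  | mem _ hx =>
    obtain ⟨g, rfl⟩ := hx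
    obtain ⟨a, ha, n, rfl⟩ := exists_mem_eq_mul_pow_of_closure_eq_top hcl g
    obtain ⟨c, hc, hcn⟩ := exists_mul_pow_two_pow_eq hconj hr ha n k
    exact ⟨c, hc, (t ^ 2 ^ k) ^ n, npow_mem_zpowers _ n, by rw [hcn, pow_mul]⟩
  | one => exact ⟨1, A.one_mem, 1, one_mem _, by simp⟩
  | mul _ _ _ _ hx hy =>
    obtain ⟨c, hc, z, hz, rfl⟩ := hx
    obtain ⟨d, hd, w, hw, rfl⟩ := hy
    have hzd : z * d * z⁻¹ ∈ A := ‹A.Normal›.conj_mem d hd z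
    refine ⟨c * (z * d * z⁻¹), A.mul_mem hc hzd, z * w, mul_mem hz hw, ?_⟩
    rw [Commute.mul_pow (hA c hc _ hzd), conj_pow]
    group
  | inv _ _ hx =>
    obtain ⟨c, hc, z, hz, rfl⟩ := hx
    refine ⟨z⁻¹ * c⁻¹ * z⁻¹⁻¹, ‹A.Normal›.conj_mem _ (A.inv_mem hc) _, z⁻¹, inv_mem hz, ?_⟩
    rw [conj_pow, inv_pow]
    group

variable {s : ℕ}

theorem commutatorElement_eq_pow (hconj : ∀ a ∈ A, t * a * t⁻¹ = a ^ (1 + 2 ^ s)) {a : G}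
    (ha : a ∈ A) : ⁅t, a⁆ = a ^ 2 ^ s := by
  rw [commutatorElement_def, hconj a ha, pow_add, pow_one]
  group

theorem pow_two_pow_mem_zpowers_of_commutator_le [Finite G] [A.Normal] (hG : IsPGroup 2 G)
    (hA : ∀ a ∈ A, ∀ b ∈ A, a * b = b * a) (hcl : closure ((A : Set G) ∪ {t}) = ⊤)
    (hconj : ∀ a ∈ A, t * a * t⁻¹ = a ^ (1 + 2 ^ s)) (hs : s ≠ 0) {m : ℕ} (hsm : s < m)
    (habel : commutator G ≤ powSubgroup G (2 ^ m)) {a : G} (ha : a ∈ A) :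
    a ^ 2 ^ s ∈ zpowers (t ^ 2 ^ m) := by
  have hodd : Odd (1 + 2 ^ s) := (Nat.even_pow.mpr ⟨even_two, hs⟩).one_add
  refine pow_mem_of_forall_pow_eq_sq_mul hG hA (fun a ha => ?_) ha
  have hmem : a ^ 2 ^ s ∈ commutator G := by
    rw [← commutatorElement_eq_pow hconj ha, commutator_def]
    exact commutator_mem_commutator (mem_top t) (mem_top a)
  obtain ⟨c, hc, z, hz, hcz⟩ :=
    exists_eq_pow_mul_of_mem_powSubgroup hA hcl hconj hodd m (habel hmem)
  refine ⟨c ^ 2 ^ (m - s - 1), A.pow_mem hc _, z, hz, ?_⟩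
  rw [hcz, ← pow_mul, ← pow_mul, ← pow_succ, ← pow_add]
  congr 3
  omega

theorem conj_eq_self_iff_pow_eq_one (hconj : ∀ a ∈ A, t * a * t⁻¹ = a ^ (1 + 2 ^ s)) {a : G}
    (ha : a ∈ A) : t * a * t⁻¹ = a ↔ a ^ 2 ^ s = 1 := by
  rw [hconj a ha, pow_add, pow_one, mul_eq_left]

theorem mem_center_iff_pow_eq_one (hA : ∀ a ∈ A, ∀ b ∈ A, a * b = b * a)
    (hcl : closure ((A : Set G) ∪ {t}) = ⊤) (hconj : ∀ a ∈ A, t * a * t⁻¹ = a ^ (1 + 2 ^ s))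
    {a : G} (ha : a ∈ A) : a ∈ center G ↔ a ^ 2 ^ s = 1 := by
  rw [← conj_eq_self_iff_pow_eq_one hconj ha, mul_inv_eq_iff_eq_mul, mem_center_iff]
  refine ⟨fun h => h t, fun h g => ?_⟩
  have hle : closure ((A : Set G) ∪ {t}) ≤ centralizer {a} := by
    refine (closure_le _).mpr ?_
    rintro x (hx | rfl)
    · exact mem_centralizer_singleton_iff.mpr (hA x hx a ha)
    · exact mem_centralizer_singleton_iff.mpr h
  rw [hcl] at hle
  exact mem_centralizer_singleton_iff.mp (hle (mem_top g))

theorem pow_mul_mul_inv_pow_eq_pow_one_add (hconj : ∀ a ∈ A, t * a * t⁻¹ = a ^ (1 + 2 ^ s))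
    (hexp : ∀ a ∈ A, (a ^ 2 ^ s) ^ 2 ^ s = 1) {a : G} (ha : a ∈ A) (k : ℕ) :
    t ^ k * a * (t ^ k)⁻¹ = a ^ (1 + 2 ^ s * k) := by
  induction k with
  | zero => simp
  | succ k ih =>
    calc t ^ (k + 1) * a * (t ^ (k + 1))⁻¹ = t * (t ^ k * a * (t ^ k)⁻¹) * t⁻¹ := by group
      _ = a ^ (1 + 2 ^ s * (k + 1)) * ((a ^ 2 ^ s) ^ 2 ^ s) ^ k := by
        rw [ih, ← conj_pow, hconj a ha, ← pow_mul, ← pow_mul, ← pow_mul, ← pow_add]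
        congr 1
        ring
      _ = a ^ (1 + 2 ^ s * (k + 1)) := by rw [hexp a ha, one_pow, mul_one]

theorem commutator_le_of_commutatorElement_mem (hA : ∀ a ∈ A, ∀ b ∈ A, a * b = b * a)
    (hcl : closure ((A : Set G) ∪ {t}) = ⊤) {N : Subgroup G} [N.Normal]
    (hN : ∀ a ∈ A, ⁅t, a⁆ ∈ N) : commutator G ≤ N := by
  rw [← Normal.quotient_commutative_iff_commutator_le]
  set π := QuotientGroup.mk' N
  set S := π '' ((A : Set G) ∪ {t})
  have htA : ∀ a ∈ A, π t * π a = π a * π t := fun a ha => by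
    rw [← commutatorElement_eq_one_iff_mul_comm, ← map_commutatorElement, QuotientGroup.mk'_apply,
      QuotientGroup.eq_one_iff]
    exact hN a ha
  have hS : ∀ x ∈ S, ∀ y ∈ S, x * y = y * x := by
    rintro _ ⟨x, hx | rfl, rfl⟩ _ ⟨y, hy | rfl, rfl⟩
    · rw [← map_mul, hA x hx y hy, map_mul]
    · exact (htA x hx).symm
    · exact htA y hy
    · rfl
  have htop : closure S = ⊤ := by
    rw [← MonoidHom.map_closure, hcl, ← MonoidHom.range_eq_map, QuotientGroup.range_mk']
  have := isMulCommutative_closure hS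
  exact ⟨⟨fun x y => setLike_mul_comm (s := closure S) (htop ▸ mem_top x) (htop ▸ mem_top y)⟩⟩

theorem zpowers_normal_of_pow_mem [Finite G] [A.Normal] (hcl : closure ((A : Set G) ∪ {t}) = ⊤)
    (hconj : ∀ a ∈ A, t * a * t⁻¹ = a ^ (1 + 2 ^ s)) (hpow : ∀ a ∈ A, a ^ 2 ^ s ∈ zpowers t) :
    (zpowers t).Normal := by
  refine ⟨fun x hx g => ?_⟩
  obtain ⟨a, ha, n, rfl⟩ := exists_mem_eq_mul_pow_of_closure_eq_top hcl g
  obtain ⟨k, rfl⟩ := mem_zpowers_iff.mp hx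
  have hat : a * t * a⁻¹ = (a ^ 2 ^ s)⁻¹ * t := by
    calc a * t * a⁻¹ = a * (t * a⁻¹ * t⁻¹) * t := by group
      _ = (a ^ 2 ^ s)⁻¹ * t := by rw [hconj a⁻¹ (A.inv_mem ha), pow_add, pow_one, inv_pow]; group
  have hconj_k : a * t ^ n * t ^ k * (a * t ^ n)⁻¹ = (a * t * a⁻¹) ^ k := by rw [conj_zpow]; group
  rw [hconj_k, hat]
  exact zpow_mem (mul_mem (inv_mem (hpow a ha)) (mem_zpowers t)) k

theorem pow_two_pow_pow_two_pow_eq_one (hconj : ∀ a ∈ A, t * a * t⁻¹ = a ^ (1 + 2 ^ s)) {a : G}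
    (ha : a ∈ A) (hpow : a ^ 2 ^ s ∈ zpowers t) : (a ^ 2 ^ s) ^ 2 ^ s = 1 := by
  obtain ⟨k, hk⟩ := mem_zpowers_iff.mp hpow
  rw [← conj_eq_self_iff_pow_eq_one hconj (A.pow_mem ha _), ← hk]
  group

theorem closure_inf_center_sup_zpowers_union_eq_top (hA : ∀ a ∈ A, ∀ b ∈ A, a * b = b * a)
    (hcl : closure ((A : Set G) ∪ {t}) = ⊤) (hconj : ∀ a ∈ A, t * a * t⁻¹ = a ^ (1 + 2 ^ s))
    {m : ℕ} (hpow : ∀ a ∈ A, a ^ 2 ^ s ∈ zpowers (t ^ 2 ^ m)) {b : G} (hb : b ∈ A)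
    (hbt : (b ^ 2 ^ s)⁻¹ = t ^ 2 ^ m) :
    closure ((((A ⊓ center G) ⊔ zpowers t : Subgroup G) : Set G) ∪ {b}) = ⊤ := by
  rw [eq_top_iff, ← hcl]
  refine (closure_le _).mpr ?_
  rintro x (hx | rfl)
  · obtain ⟨j, hj⟩ := mem_zpowers_iff.mp (hpow x hx)
    have hxb : x * b ^ j ∈ A := A.mul_mem hx (A.zpow_mem hb j)
    have hc : x * b ^ j ∈ A ⊓ center G := by
      refine ⟨hxb, (mem_center_iff_pow_eq_one hA hcl hconj hxb).mpr ?_⟩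
      rw [Commute.mul_pow (hA _ hx _ (A.zpow_mem hb j)), ← hj, ← hbt, inv_zpow, ← zpow_natCast,
        ← zpow_natCast, ← zpow_mul, ← zpow_mul, mul_comm, inv_mul_cancel]
    have hb' : b ∈ closure ((((A ⊓ center G) ⊔ zpowers t : Subgroup G) : Set G) ∪ {b}) :=
      Subgroup.subset_closure (Set.mem_union_right _ rfl)
    rw [← mul_inv_cancel_right x (b ^ j)]
    exact mul_mem (Subgroup.subset_closure (Or.inl (mem_sup_left hc))) (inv_mem (zpow_mem hb' j))
  · exact Subgroup.subset_closure (Or.inl (mem_sup_right (mem_zpowers _)))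

theorem mul_mul_inv_eq_pow_of_mem_inf_center_sup_zpowers [Finite G] [A.Normal]
    (hA : ∀ a ∈ A, ∀ b ∈ A, a * b = b * a) (hcl : closure ((A : Set G) ∪ {t}) = ⊤)
    (hconj : ∀ a ∈ A, t * a * t⁻¹ = a ^ (1 + 2 ^ s)) (hexp : ∀ a ∈ A, (a ^ 2 ^ s) ^ 2 ^ s = 1)
    {m : ℕ} (hsm : s ≤ m) {b : G} (hb : b ∈ A) (hbt : (b ^ 2 ^ s)⁻¹ = t ^ 2 ^ m) {x : G}
    (hx : x ∈ (A ⊓ center G) ⊔ zpowers t) : b * x * b⁻¹ = x ^ (1 + 2 ^ m) := by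
  obtain ⟨c, hc, k, rfl⟩ := exists_mem_eq_mul_pow_of_mem_sup_zpowers hx
  have hcm : c ^ 2 ^ m = 1 := by
    obtain ⟨e, he⟩ := pow_dvd_pow 2 hsm
    rw [he, pow_mul, (mem_center_iff_pow_eq_one hA hcl hconj hc.1).mp hc.2, one_pow]
  have hbk : b * t ^ k * b⁻¹ = (t ^ 2 ^ m) ^ k * t ^ k := by
    calc b * t ^ k * b⁻¹ = b * (t ^ k * b⁻¹ * (t ^ k)⁻¹) * t ^ k := by group
      _ = (t ^ 2 ^ m) ^ k * t ^ k := by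
        rw [pow_mul_mul_inv_pow_eq_pow_one_add hconj hexp (A.inv_mem hb), pow_add, pow_one,
          mul_inv_cancel_left, pow_mul, inv_pow, hbt]
  calc b * (c * t ^ k) * b⁻¹ = c * (b * t ^ k * b⁻¹) := by
        rw [← mul_assoc, mem_center_iff.mp hc.2 b]; group
    _ = (c * t ^ k) ^ (1 + 2 ^ m) := by
        rw [hbk, Commute.mul_pow (mem_center_iff.mp hc.2 _).symm, pow_add c, pow_one, hcm,
          mul_one, pow_add (t ^ k), pow_one, ← pow_mul, ← pow_mul, ← pow_add, ← pow_add,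
          mul_comm k, add_comm]

theorem isIwasawaStructure_inf_center_sup_zpowers [Finite G] [A.Normal]
    (hA : ∀ a ∈ A, ∀ b ∈ A, a * b = b * a) (hcl : closure ((A : Set G) ∪ {t}) = ⊤)
    (hconj : ∀ a ∈ A, t * a * t⁻¹ = a ^ (1 + 2 ^ s)) {m : ℕ} (hsm : s ≤ m)
    (hpow : ∀ a ∈ A, a ^ 2 ^ s ∈ zpowers (t ^ 2 ^ m)) {b : G} (hb : b ∈ A)
    (hbt : (b ^ 2 ^ s)⁻¹ = t ^ 2 ^ m) :
    IsIwasawaStructure ((A ⊓ center G) ⊔ zpowers t) b m := by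
  have hpow' : ∀ a ∈ A, a ^ 2 ^ s ∈ zpowers t :=
    fun a ha => zpowers_le.mpr (npow_mem_zpowers t _) (hpow a ha)
  have := zpowers_normal_of_pow_mem hcl hconj hpow'
  refine ⟨inferInstance, fun x hx y hy => ?_,
    closure_inf_center_sup_zpowers_union_eq_top hA hcl hconj hpow hb hbt,
    fun x hx => mul_mul_inv_eq_pow_of_mem_inf_center_sup_zpowers hA hcl hconj
      (fun a ha => pow_two_pow_pow_two_pow_eq_one hconj ha (hpow' a ha)) hsm hb hbt hx⟩
  obtain ⟨c, hc, k, rfl⟩ := exists_mem_eq_mul_pow_of_mem_sup_zpowers hx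
  obtain ⟨d, hd, l, rfl⟩ := exists_mem_eq_mul_pow_of_mem_sup_zpowers hy
  exact Commute.mul_left (mem_center_iff.mp hc.2 _).symm
    (Commute.mul_right (mem_center_iff.mp hd.2 _) (Commute.pow_pow_self t k l))

end

theorem exists_isIwasawaStructure_of_strength_general {G : Type*} [Group G] [Finite G]
    (hG : IsPGroup 2 G)
    (A : Subgroup G) (t : G) (s m : ℕ) (hs : 2 ≤ s) (hsm : s < m)
    (h : IsIwasawaStructure A t s)
    (habel : commutator G ≤ powSubgroup G (2 ^ m))
    (hmax : ¬ commutator G ≤ powSubgroup G (2 ^ (m + 1))) :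
    ∃ (A' : Subgroup G) (t' : G), IsIwasawaStructure A' t' m := by
  obtain ⟨hAn, hA, hcl, hconj⟩ := h
  have hpow : ∀ a ∈ A, a ^ 2 ^ s ∈ Subgroup.zpowers (t ^ 2 ^ m) := fun a ha =>
    pow_two_pow_mem_zpowers_of_commutator_le hG hA hcl hconj (by omega) hsm habel ha
  obtain ⟨a, ha, hnot⟩ : ∃ a ∈ A, a ^ 2 ^ s ∉ powSubgroup G (2 ^ (m + 1)) := by
    by_contra! H
    exact hmax (commutator_le_of_commutatorElement_mem hA hcl
      fun a ha => commutatorElement_eq_pow hconj ha ▸ H a ha)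
  obtain ⟨j, hj⟩ := Subgroup.mem_zpowers_iff.mp
    (hG.pow_two_pow_mem_zpowers_of_not_mem_powSubgroup (hpow a ha) hnot)
  refine ⟨_, _, isIwasawaStructure_inf_center_sup_zpowers hA hcl hconj hsm.le hpow
    (A.zpow_mem ha (-j)) ?_⟩
  rw [← hj, ← zpow_natCast, ← zpow_natCast, ← zpow_mul, ← zpow_mul, ← zpow_neg]
  congr 1
  ring

/-- Let `G` be a non-abelian finite 2-group with an Iwasawa structure `(A, t)` of level
`s ≥ 2`, and let `m` be the strength of `G`, i.e. `G / G ^ (2 ^ m)` is abelian but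
`G / G ^ (2 ^ (m + 1))` is not.  If `m > s`, then `G` also admits an Iwasawa structure
of level `m`. -/
theorem exists_isIwasawaStructure_of_strength {G : Type*} [Group G] [Finite G]
    (hG : IsPGroup 2 G) (hna : ¬ ∀ a b : G, a * b = b * a)
    (A : Subgroup G) (t : G) (s m : ℕ) (hs : 2 ≤ s) (hsm : s < m)
    (h : IsIwasawaStructure A t s)
    (habel : commutator G ≤ powSubgroup G (2 ^ m))
    (hmax : ¬ commutator G ≤ powSubgroup G (2 ^ (m + 1))) :
    ∃ (A' : Subgroup G) (t' : G), IsIwasawaStructure A' t' m :=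
  exists_isIwasawaStructure_of_strength_general hG A t s m hs hsm h habel hmax
end

section
/- Let K be a field of characteristic not 2 containing a primitive 4th root of unity, let (V,q) be a non-degenerate finite-dimensional quadratic space over K, and let g be an orthogonal automorphism of (V,q) of order dividing 4. Then V decomposes as an orthogonal direct sum of the fixed space V^(g²) of g² and a subspace V₀ on which q is hyperbolic. -/
/-- A quadratic form is hyperbolic on a submodule `V₀` if the restriction of its polar
form to `V₀` is non-degenerate and `V₀` contains a totally isotropic subspace of half
its dimension. -/
def IsHyperbolicOn {K V : Type*} [Field K] [AddCommGroup V] [Module K V]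
    (q : QuadraticForm K V) (V₀ : Submodule K V) : Prop :=
  (∀ x ∈ V₀, (∀ y ∈ V₀, QuadraticMap.polar (⇑q) x y = 0) → x = 0) ∧
  ∃ W : Submodule K V, W ≤ V₀ ∧ (∀ x ∈ W, q x = 0) ∧
    2 * Module.finrank K W = Module.finrank K V₀

/-- Auxiliary: a totally isotropic piece of a splitting of a non-degenerate space has
dimension at most that of its complement. -/
lemma aux_finrank_le {K V : Type*} [Field K] [AddCommGroup V] [Module K V]
    [FiniteDimensional K V]
    (q : QuadraticForm K V) (V₀ W₁ W₂ : Submodule K V)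
    (h1 : W₁ ≤ V₀) (hsup : W₁ ⊔ W₂ = V₀)
    (hnd : ∀ x ∈ V₀, (∀ y ∈ V₀, QuadraticMap.polar (⇑q) x y = 0) → x = 0)
    (hiso1 : ∀ x ∈ W₁, ∀ y ∈ W₁, QuadraticMap.polar (⇑q) x y = 0) :
    Module.finrank K W₁ ≤ Module.finrank K W₂ := by
  set B : W₁ →ₗ[K] Module.Dual K W₂ :=
    q.polarBilin.compl₁₂ W₁.subtype W₂.subtype with hBdef
  have hBapp : ∀ (x : W₁) (y : W₂), B x y = QuadraticMap.polar (⇑q) (x : V) (y : V) := by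
    intro x y
    simp [hBdef, LinearMap.compl₁₂_apply, QuadraticMap.polarBilin_apply_apply]
  have hinj : Function.Injective ⇑B := by
    rw [← LinearMap.ker_eq_bot, LinearMap.ker_eq_bot']
    intro x hx
    have hx0 : (x : V) = 0 := by
      apply hnd _ (h1 x.2)
      intro y hy
      rw [← hsup] at hy
      obtain ⟨a, ha, b, hb, rfl⟩ := Submodule.mem_sup.mp hy
      rw [QuadraticMap.polar_add_right]
      have h1' : QuadraticMap.polar (⇑q) (x : V) a = 0 := hiso1 _ x.2 _ ha
      have h2' : QuadraticMap.polar (⇑q) (x : V) b = 0 := by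
        have := hBapp x ⟨b, hb⟩
        rw [hx] at this
        simpa using this.symm
      rw [h1', h2', add_zero]
    exact Subtype.ext hx0
  calc Module.finrank K W₁ ≤ Module.finrank K (Module.Dual K W₂) :=
        LinearMap.finrank_le_finrank_of_injective hinj
    _ = Module.finrank K W₂ := Subspace.dual_finrank_eq

/-- Let `K` be a field of characteristic `≠ 2` containing a primitive 4th root of unity,
`(V, q)` a non-degenerate finite-dimensional quadratic space over `K`, and `g` an
orthogonal automorphism of `(V, q)` with `g⁴ = 1`.  Then `V` decomposes as an orthogonal
direct sum of the fixed space of `g²` and a subspace `V₀` on which `q` is hyperbolic. -/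
theorem orthogonal_decomposition_of_order_four {K V : Type*} [Field K] [AddCommGroup V]
    [Module K V] [FiniteDimensional K V]
    (h2 : (2 : K) ≠ 0) (hζ : ∃ ζ : K, ζ ^ 2 = -1)
    (q : QuadraticForm K V) (hq : ∀ x : V, (∀ y : V, QuadraticMap.polar (⇑q) x y = 0) → x = 0)
    (g : V →ₗ[K] V) (hiso : ∀ v : V, q (g v) = q v) (hord : g ^ 4 = 1) :
    ∃ V₀ : Submodule K V,
      IsCompl (LinearMap.ker (g ^ 2 - 1)) V₀ ∧
      (∀ x ∈ LinearMap.ker (g ^ 2 - 1), ∀ y ∈ V₀, QuadraticMap.polar (⇑q) x y = 0) ∧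
      IsHyperbolicOn q V₀ := by
  obtain ⟨ζ, hζ2⟩ := hζ
  have hζ0 : ζ ≠ 0 := by
    intro h; rw [h] at hζ2; simp at hζ2
  -- scalar halving
  have halve : ∀ a : K, a = -a → a = 0 := by
    intro a h
    have h' : 2 * a = 0 := by rw [two_mul]; nth_rewrite 1 [h]; rw [neg_add_cancel]
    rcases mul_eq_zero.mp h' with h'' | h''
    · exact absurd h'' h2
    · exact h''
  have halveV : ∀ x : V, x = -x → x = 0 := by
    intro x h
    have h' : (2 : K) • x = 0 := by rw [two_smul]; nth_rewrite 1 [h]; rw [neg_add_cancel]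
    rcases smul_eq_zero.mp h' with h'' | h''
    · exact absurd h'' h2
    · exact h''
  -- g⁴ = 1 pointwise
  have hg4 : ∀ v : V, g (g (g (g v))) = v := by
    intro v
    have := LinearMap.ext_iff.mp hord v
    simpa [pow_succ, Module.End.mul_apply] using this
  -- membership in the kernels
  have memVp : ∀ v : V, v ∈ LinearMap.ker (g ^ 2 - 1) ↔ g (g v) = v := by
    intro v
    rw [LinearMap.mem_ker, LinearMap.sub_apply, Module.End.one_apply, sub_eq_zero,
      pow_two, Module.End.mul_apply]
  set V₀ : Submodule K V := LinearMap.ker (g ^ 2 + 1) with hV₀def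
  have memV0 : ∀ v : V, v ∈ V₀ ↔ g (g v) = -v := by
    intro v
    rw [hV₀def, LinearMap.mem_ker, LinearMap.add_apply, Module.End.one_apply,
      add_eq_zero_iff_eq_neg, pow_two, Module.End.mul_apply]
  -- polar invariance
  have hpol : ∀ x y : V, QuadraticMap.polar (⇑q) (g x) (g y) = QuadraticMap.polar (⇑q) x y := by
    intro x y
    simp [QuadraticMap.polar, ← map_add, hiso]
  -- decomposition of any vector
  have hdec : ∀ v : V, ∃ a b : V, a ∈ LinearMap.ker (g ^ 2 - 1) ∧ b ∈ V₀ ∧ v = a + b := by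
    intro v
    refine ⟨(2 : K)⁻¹ • (v + g (g v)), (2 : K)⁻¹ • (v - g (g v)), ?_, ?_, ?_⟩
    · rw [memVp]
      simp only [map_smul, map_add, map_sub, hg4]
      rw [add_comm]
    · rw [memV0]
      simp only [map_smul, map_sub, hg4, smul_neg, ← smul_neg]
      congr 1
      abel
    · rw [← smul_add]
      have : v + g (g v) + (v - g (g v)) = (2 : K) • v := by
        rw [two_smul]; abel
      rw [this, inv_smul_smul₀ h2]
  -- IsCompl
  have hcompl : IsCompl (LinearMap.ker (g ^ 2 - 1)) V₀ := by
    constructor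
    · rw [Submodule.disjoint_def]
      intro v hv1 hv2
      rw [memVp] at hv1
      rw [memV0] at hv2
      exact halveV v (hv1.symm.trans hv2)
    · rw [codisjoint_iff, eq_top_iff]
      intro v _
      obtain ⟨a, b, ha, hb, rfl⟩ := hdec v
      exact Submodule.add_mem_sup ha hb
  -- orthogonality
  have horth : ∀ x ∈ LinearMap.ker (g ^ 2 - 1), ∀ y ∈ V₀,
      QuadraticMap.polar (⇑q) x y = 0 := by
    intro x hx y hy
    rw [memVp] at hx
    rw [memV0] at hy
    apply halve
    calc QuadraticMap.polar (⇑q) x y = QuadraticMap.polar (⇑q) (g (g x)) (g (g y)) := by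
          rw [hpol, hpol]
      _ = QuadraticMap.polar (⇑q) x (-y) := by rw [hx, hy]
      _ = -QuadraticMap.polar (⇑q) x y := QuadraticMap.polar_neg_right q x y
  -- nondegeneracy on V₀
  have hnd : ∀ x ∈ V₀, (∀ y ∈ V₀, QuadraticMap.polar (⇑q) x y = 0) → x = 0 := by
    intro x hx hxo
    apply hq
    intro y
    obtain ⟨a, b, ha, hb, rfl⟩ := hdec y
    rw [QuadraticMap.polar_add_right, QuadraticMap.polar_comm (⇑q) x a, horth a ha x hx,
      hxo b hb, add_zero]
  -- eigenspaces of g on V₀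
  set Wp : Submodule K V := LinearMap.ker (g - ζ • 1) with hWpdef
  set Wm : Submodule K V := LinearMap.ker (g + ζ • 1) with hWmdef
  have memWp : ∀ v : V, v ∈ Wp ↔ g v = ζ • v := by
    intro v
    rw [hWpdef, LinearMap.mem_ker, LinearMap.sub_apply, LinearMap.smul_apply,
      Module.End.one_apply, sub_eq_zero]
  have memWm : ∀ v : V, v ∈ Wm ↔ g v = -(ζ • v) := by
    intro v
    rw [hWmdef, LinearMap.mem_ker, LinearMap.add_apply, LinearMap.smul_apply,
      Module.End.one_apply, add_eq_zero_iff_eq_neg]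
  have hζζ : ∀ v : V, ζ • ζ • v = -v := by
    intro v
    rw [smul_smul, ← pow_two, hζ2, neg_one_smul]
  have hWpV0 : Wp ≤ V₀ := by
    intro v hv
    rw [memWp] at hv
    rw [memV0, hv, map_smul, hv, hζζ]
  have hWmV0 : Wm ≤ V₀ := by
    intro v hv
    rw [memWm] at hv
    rw [memV0, hv, map_neg, map_smul, hv, smul_neg, neg_neg, hζζ]
  -- q vanishes on Wp and on Wm
  have hisoWp : ∀ x ∈ Wp, q x = 0 := by
    intro x hx
    rw [memWp] at hx
    apply halve
    have := hiso x
    rw [hx, QuadraticMap.map_smul, ← pow_two, hζ2, smul_eq_mul, neg_one_mul] at this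
    exact this.symm
  have hisoWm : ∀ x ∈ Wm, q x = 0 := by
    intro x hx
    rw [memWm] at hx
    apply halve
    have := hiso x
    rw [hx, QuadraticMap.map_neg, QuadraticMap.map_smul, ← pow_two, hζ2,
      smul_eq_mul, neg_one_mul] at this
    exact this.symm
  -- polar vanishes on Wp × Wp and Wm × Wm
  have hpolWp : ∀ x ∈ Wp, ∀ y ∈ Wp, QuadraticMap.polar (⇑q) x y = 0 := by
    intro x hx y hy
    have hxy : x + y ∈ Wp := Wp.add_mem hx hy
    simp [QuadraticMap.polar, hisoWp _ hx, hisoWp _ hy, hisoWp _ hxy]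
  have hpolWm : ∀ x ∈ Wm, ∀ y ∈ Wm, QuadraticMap.polar (⇑q) x y = 0 := by
    intro x hx y hy
    have hxy : x + y ∈ Wm := Wm.add_mem hx hy
    simp [QuadraticMap.polar, hisoWm _ hx, hisoWm _ hy, hisoWm _ hxy]
  -- V₀ = Wp ⊔ Wm
  have hsup : Wp ⊔ Wm = V₀ := by
    apply le_antisymm (sup_le hWpV0 hWmV0)
    intro v hv
    rw [memV0] at hv
    have ha : (2 : K)⁻¹ • (v - ζ • g v) ∈ Wp := by
      refine Wp.smul_mem _ ?_
      rw [memWp, map_sub, map_smul, hv, smul_neg, sub_neg_eq_add, smul_sub, hζζ,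
        sub_neg_eq_add]
      abel
    have hb : (2 : K)⁻¹ • (v + ζ • g v) ∈ Wm := by
      refine Wm.smul_mem _ ?_
      rw [memWm, map_add, map_smul, hv, smul_neg, smul_add, hζζ]
      abel
    have hab : (2 : K)⁻¹ • (v - ζ • g v) + (2 : K)⁻¹ • (v + ζ • g v) = v := by
      rw [← smul_add]
      have : v - ζ • g v + (v + ζ • g v) = (2 : K) • v := by rw [two_smul]; abel
      rw [this, inv_smul_smul₀ h2]
    exact Submodule.mem_sup.mpr ⟨_, ha, _, hb, hab⟩
  -- Wp ⊓ Wm = ⊥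
  have hinf : Wp ⊓ Wm = ⊥ := by
    apply (Submodule.eq_bot_iff _).mpr
    intro v hv
    obtain ⟨hv1, hv2⟩ := Submodule.mem_inf.mp hv
    rw [memWp] at hv1
    rw [memWm] at hv2
    have hz : ζ • v = 0 := halveV _ (hv1.symm.trans hv2)
    rcases smul_eq_zero.mp hz with h | h
    · exact absurd h hζ0
    · exact h
  -- dimension count
  have hle1 : Module.finrank K Wp ≤ Module.finrank K Wm :=
    aux_finrank_le q V₀ Wp Wm hWpV0 hsup hnd hpolWp
  have hle2 : Module.finrank K Wm ≤ Module.finrank K Wp :=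
    aux_finrank_le q V₀ Wm Wp hWmV0 (by rw [sup_comm]; exact hsup) hnd hpolWm
  have heq : Module.finrank K Wp = Module.finrank K Wm := le_antisymm hle1 hle2
  have hdim : 2 * Module.finrank K Wp = Module.finrank K V₀ := by
    have := Submodule.finrank_sup_add_finrank_inf_eq Wp Wm
    rw [hsup, hinf, finrank_bot, add_zero] at this
    omega
  exact ⟨V₀, hcompl, horth, hnd, Wp, hWpV0, hisoWp, hdim⟩
end

section
/- Let K be a field of characteristic not 2 containing a primitive 4th root of unity, and let L = K(√a₁, ..., √a_r) be a (ℤ/2)^r-Galois extension of K, where a₁, ..., a_r ∈ K*. Then the trace form q_{L/K}(x) = Tr_{L/K}(x²) is isometric to ⟨2^r⟩ ⊗ ⟨⟨a₁, ..., a_r⟩⟩, where ⟨⟨a₁,...,a_r⟩⟩ = ⊗ᵢ ⟨1, aᵢ⟩ is the r-fold Pfister form (note ⟨1,-a⟩ ≅ ⟨1,a⟩ since -1 is a square). -/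
/-!
Write `v_ε = ∏_{εᵢ} bᵢ` for `ε ∈ {0,1}^r`. Every automorphism moves each `bᵢ` to `±bᵢ` and is
determined by these signs, so comparing cardinalities, every sign pattern is realised by an
automorphism. For `η ≠ 0` some automorphism therefore sends `v_η` to `-v_η`, and since the trace
is invariant under automorphisms, `Tr(v_η) = 0`. As `v_ε v_δ ∈ K · v_{ε+δ}`, the `v_ε` are
pairwise orthogonal for the trace form, with `Tr(v_ε²) = 2^r ∏_{εᵢ} aᵢ ≠ 0`; being `2^r` of them,
they form an orthogonal basis.
-/

open QuadraticMap

namespace LinearMap.BilinForm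

theorem IsSymm.equivalent_weightedSumSquares_of_iIsOrtho {K V ι : Type*} [Field K]
    [AddCommGroup V] [Module K V] [FiniteDimensional K V] [Fintype ι] (h2 : (2 : K) ≠ 0)
    {B : LinearMap.BilinForm K V} (hB : B.IsSymm) {v : ι → V} (hv : B.iIsOrtho v) (hvv : ∀ i, B (v i) (v i) ≠ 0)
    (hcard : Fintype.card ι = Module.finrank K V) :
    B.toQuadraticMap.Equivalent (weightedSumSquares K fun i => B (v i) (v i)) := by
  let : Invertible (2 : K) := invertibleOfNonzero h2
  have hli := linearIndependent_of_iIsOrtho hv hvv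
  let basis := basisOfLinearIndependentOfCardEqFinrank' v hli hcard
  have hbasis : ⇑basis = v := by simp [basis, basisOfLinearIndependentOfCardEqFinrank']
  have hassoc : associated (R := K) B.toQuadraticMap = B :=
    associated_left_inverse (S := K) hB.eq
  have hrepr := basisRepr_eq_of_iIsOrtho B.toQuadraticMap basis (by rw [hassoc, hbasis]; exact hv)
  rw [hbasis] at hrepr
  exact ⟨hrepr ▸ B.toQuadraticMap.isometryEquivBasisRepr basis⟩

end LinearMap.BilinForm

theorem AlgEquiv.apply_eq_or_eq_neg_of_sq_eq_algebraMap {R A : Type*} [CommSemiring R]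
    [CommRing A] [IsDomain A] [Algebra R A] (σ : A ≃ₐ[R] A) {x : A} {c : R}
    (hx : x ^ 2 = algebraMap R A c) : σ x = x ∨ σ x = -x :=
  mul_self_eq_mul_self_iff.mp <| by rw [← pow_two, ← pow_two, ← map_pow, hx, σ.commutes]

theorem Algebra.trace_eq_zero_of_apply_eq_neg {K L : Type*} [Field K] [CommRing L] [Algebra K L]
    (h2 : (2 : K) ≠ 0) (σ : L ≃ₐ[K] L) {x : L} (hx : σ x = -x) : Algebra.trace K L x = 0 := by
  have h := Algebra.trace_eq_of_algEquiv σ x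
  rw [hx, map_neg] at h
  have h2x : (2 : K) * Algebra.trace K L x = 0 := by linear_combination -h
  exact (mul_eq_zero.mp h2x).resolve_left h2

namespace Multiquadratic

variable {r : ℕ}

def monomial {M : Type*} [CommMonoid M] (b : Fin r → M) (ε : Fin r → Bool) : M :=
  ∏ i, if ε i then b i else 1

theorem monomial_mul_monomial {R A : Type*} [CommSemiring R] [CommSemiring A] [Algebra R A]
    {a : Fin r → R} {b : Fin r → A} (hb : ∀ i, b i ^ 2 = algebraMap R A (a i))
    (ε δ : Fin r → Bool) :
    monomial b ε * monomial b δ =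
      algebraMap R A (∏ i, if ε i && δ i then a i else 1) *
        monomial b (fun i => xor (ε i) (δ i)) := by
  simp only [monomial, map_prod, ← Finset.prod_mul_distrib]
  refine Finset.prod_congr rfl fun i _ => ?_
  obtain hε | hε := Bool.eq_false_or_eq_true (ε i) <;>
    obtain hδ | hδ := Bool.eq_false_or_eq_true (δ i) <;> simp [hε, hδ, ← hb i, pow_two]

variable {K L : Type*} [Field K] [Field L] [Algebra K L] {a : Fin r → K} {b : Fin r → L}

open Classical in
noncomputable def flipPattern (b : Fin r → L) (σ : L ≃ₐ[K] L) : Fin r → Bool :=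
  fun i => decide (σ (b i) ≠ b i)

theorem flipPattern_injective (hb : ∀ i, b i ^ 2 = algebraMap K L (a i))
    (hgen : Algebra.adjoin K (Set.range b) = ⊤) :
    Function.Injective (flipPattern (K := K) b) := by
  intro σ τ h
  apply AlgEquiv.coe_toAlgHom_injective
  refine AlgHom.ext_of_adjoin_eq_top hgen ?_
  rintro _ ⟨i, rfl⟩
  have hi : σ (b i) = b i ↔ τ (b i) = b i := not_iff_not.mp (decide_eq_decide.mp (congrFun h i))
  by_cases hσ : σ (b i) = b i
  · simp [hσ, hi.mp hσ]
  · have hτ : τ (b i) ≠ b i := fun h => hσ (hi.mpr h)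
    have hσ' := (σ.apply_eq_or_eq_neg_of_sq_eq_algebraMap (hb i)).resolve_left hσ
    have hτ' := (τ.apply_eq_or_eq_neg_of_sq_eq_algebraMap (hb i)).resolve_left hτ
    simp [hσ', hτ']

theorem flipPattern_bijective [FiniteDimensional K L] [IsGalois K L]
    (hb : ∀ i, b i ^ 2 = algebraMap K L (a i)) (hgen : Algebra.adjoin K (Set.range b) = ⊤)
    (hdim : Module.finrank K L = 2 ^ r) : Function.Bijective (flipPattern (K := K) b) := by
  refine (Fintype.bijective_iff_injective_and_card _).mpr ⟨flipPattern_injective hb hgen, ?_⟩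
  rw [← Nat.card_eq_fintype_card, IsGalois.card_aut_eq_finrank, hdim]
  simp

theorem exists_apply_eq_neg_and_apply_eq [FiniteDimensional K L] [IsGalois K L]
    (hb : ∀ i, b i ^ 2 = algebraMap K L (a i)) (hgen : Algebra.adjoin K (Set.range b) = ⊤)
    (hdim : Module.finrank K L = 2 ^ r) (i₀ : Fin r) :
    ∃ σ : L ≃ₐ[K] L, σ (b i₀) = -b i₀ ∧ ∀ i ≠ i₀, σ (b i) = b i := by
  obtain ⟨σ, hσ⟩ := (flipPattern_bijective hb hgen hdim).surjective fun i => decide (i = i₀)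
  have hflip (i : Fin r) : σ (b i) ≠ b i ↔ i = i₀ := decide_eq_decide.mp (congrFun hσ i)
  refine ⟨σ, ?_, fun i hi => not_not.mp ((hflip i).not.mpr hi)⟩
  exact (σ.apply_eq_or_eq_neg_of_sq_eq_algebraMap (hb i₀)).resolve_left ((hflip i₀).mpr rfl)

theorem apply_monomial_eq_neg {σ : L ≃ₐ[K] L} {i₀ : Fin r} (hσ₀ : σ (b i₀) = -b i₀)
    (hσ : ∀ i ≠ i₀, σ (b i) = b i) {η : Fin r → Bool} (hη : η i₀ = true) :
    σ (monomial b η) = -monomial b η := by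
  have hmem := Finset.mem_univ i₀
  rw [monomial, map_prod, ← Finset.mul_prod_erase _ _ hmem, ← Finset.mul_prod_erase _ _ hmem,
    Finset.prod_congr rfl fun i hi => by
      rw [apply_ite σ, hσ i (Finset.ne_of_mem_erase hi), map_one]]
  simp [hη, hσ₀]

theorem trace_monomial_eq_zero [FiniteDimensional K L] [IsGalois K L] (h2 : (2 : K) ≠ 0)
    (hb : ∀ i, b i ^ 2 = algebraMap K L (a i)) (hgen : Algebra.adjoin K (Set.range b) = ⊤)
    (hdim : Module.finrank K L = 2 ^ r) {η : Fin r → Bool} (hη : η ≠ fun _ => false) :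
    Algebra.trace K L (monomial b η) = 0 := by
  obtain ⟨i₀, hi₀⟩ : ∃ i₀, η i₀ = true := by simpa [funext_iff] using hη
  obtain ⟨σ, hσ₀, hσ⟩ := exists_apply_eq_neg_and_apply_eq hb hgen hdim i₀
  exact Algebra.trace_eq_zero_of_apply_eq_neg h2 σ (apply_monomial_eq_neg hσ₀ hσ hi₀)

theorem traceForm_monomial_iIsOrtho [FiniteDimensional K L] [IsGalois K L] (h2 : (2 : K) ≠ 0)
    (hb : ∀ i, b i ^ 2 = algebraMap K L (a i)) (hgen : Algebra.adjoin K (Set.range b) = ⊤)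
    (hdim : Module.finrank K L = 2 ^ r) : (Algebra.traceForm K L).iIsOrtho (monomial b) := by
  intro ε δ hne
  have hxor : (fun i => xor (ε i) (δ i)) ≠ fun _ => false := fun h =>
    hne <| funext fun i => by simpa using congrFun h i
  change Algebra.traceForm K L (monomial b ε) (monomial b δ) = 0
  rw [Algebra.traceForm_apply, monomial_mul_monomial hb,
    ← Algebra.smul_def, map_smul, trace_monomial_eq_zero h2 hb hgen hdim hxor, smul_zero]

theorem traceForm_monomial_self (hb : ∀ i, b i ^ 2 = algebraMap K L (a i))
    (hdim : Module.finrank K L = 2 ^ r) (ε : Fin r → Bool) :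
    Algebra.traceForm K L (monomial b ε) (monomial b ε) = 2 ^ r * ∏ i, if ε i then a i else 1 := by
  have hxor : (fun i => xor (ε i) (ε i)) = fun _ => false := by simp
  have hone : monomial b (fun _ => false) = 1 := by simp [monomial]
  rw [Algebra.traceForm_apply, monomial_mul_monomial hb, hxor, hone, mul_one,
    Algebra.trace_algebraMap, hdim, nsmul_eq_mul]
  simp

end Multiquadratic

theorem traceForm_multiquadratic_general {K L : Type*} [Field K] [Field L] [Algebra K L]
    (h2 : (2 : K) ≠ 0)
    (r : ℕ) (a : Fin r → K) (ha : ∀ i, a i ≠ 0) (b : Fin r → L)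
    (hb : ∀ i, b i ^ 2 = algebraMap K L (a i))
    (hgen : Algebra.adjoin K (Set.range b) = ⊤)
    [IsGalois K L] (hdim : Module.finrank K L = 2 ^ r) :
    QuadraticMap.Equivalent
      ((Algebra.traceForm K L).toQuadraticMap)
      (QuadraticMap.weightedSumSquares K
        (fun ε : Fin r → Bool => (2 ^ r : K) * ∏ i, if ε i then a i else 1)) := by
  have : FiniteDimensional K L := .of_finrank_pos (by rw [hdim]; positivity)
  have hdiag (ε : Fin r → Bool) : (2 ^ r : K) * ∏ i, (if ε i then a i else 1) ≠ 0 :=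
    mul_ne_zero (pow_ne_zero _ h2) (Finset.prod_ne_zero_iff.mpr fun i _ => by
      split_ifs <;> simp [ha i])
  simp_rw [← Multiquadratic.traceForm_monomial_self hb hdim] at hdiag ⊢
  exact (Algebra.traceForm_isSymm K).equivalent_weightedSumSquares_of_iIsOrtho h2
    (Multiquadratic.traceForm_monomial_iIsOrtho h2 hb hgen hdim) hdiag (by simp [hdim])

/-- Let `K` be a field of characteristic `≠ 2` containing a primitive 4th root of unity,
and let `L = K(√a₁, …, √a_r)` be a `(ℤ/2)^r`-Galois extension of `K` (so `[L : K] = 2^r`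
and every `K`-automorphism of `L` has order dividing 2).  Then the trace form
`x ↦ Tr_{L/K}(x²)` is isometric to `⟨2^r⟩ ⊗ ⟨⟨a₁, …, a_r⟩⟩`, the diagonal form whose
coefficients are `2^r · ∏_{i ∈ ε} aᵢ` for `ε ⊆ {1, …, r}` (note `⟨1, -a⟩ ≅ ⟨1, a⟩` since
`-1` is a square). -/
theorem traceForm_multiquadratic {K L : Type*} [Field K] [Field L] [Algebra K L]
    (h2 : (2 : K) ≠ 0) (hζ : ∃ ζ : K, ζ ^ 2 = -1)
    (r : ℕ) (a : Fin r → K) (ha : ∀ i, a i ≠ 0) (b : Fin r → L)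
    (hb : ∀ i, b i ^ 2 = algebraMap K L (a i))
    (hgen : Algebra.adjoin K (Set.range b) = ⊤)
    [IsGalois K L] (hdim : Module.finrank K L = 2 ^ r)
    (hexp : ∀ σ : L ≃ₐ[K] L, σ ^ 2 = 1) :
    QuadraticMap.Equivalent
      ((Algebra.traceForm K L).toQuadraticMap)
      (QuadraticMap.weightedSumSquares K
        (fun ε : Fin r → Bool => (2 ^ r : K) * ∏ i, if ε i then a i else 1)) :=
  traceForm_multiquadratic_general h2 r a ha b hb hgen hdim
end

section
/- Let K be a rigid field containing a primitive 4th root of unity (i.e., for every non-square k ∈ K*, the form ⟨1, k⟩ represents only the square classes [1] and [k]). If a, b ∈ K* have square classes [a], [b] linearly independent over F₂ in K*/(K*)², then the 2-fold Pfister form ⟨⟨a, b⟩⟩ = ⟨1,a⟩ ⊗ ⟨1,b⟩ is anisotropic. -/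
/-!
Write the form as `P + b·Q` with `P = ⟨1,a⟩(x,y)` and `Q = ⟨1,a⟩(z,w)`. Since `-1` is a square,
`⟨1,a⟩` is anisotropic, so an isotropic vector with `Q = 0` is zero. If `Q ≠ 0`, then
`b = -PQ/Q²` lies in the square class of `PQ`. By rigidity `P` and `Q` lie in the square classes
of `1` or `a`, hence so does `PQ`, making `b` or `a·b` a square.
-/

section SquareClasses

variable {K : Type*} [Field K]

theorem isSquare_neg_of_sq_eq_neg_one {i x : K} (hi : i ^ 2 = -1) (hx : IsSquare x) :
    IsSquare (-x) := by
  obtain ⟨r, rfl⟩ := hx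
  exact ⟨i * r, by linear_combination (-(r * r)) * hi⟩

theorem eq_zero_and_eq_zero_of_sq_add_mul_sq_eq_zero {a x y : K} (hna : ¬ IsSquare (-a))
    (h : x ^ 2 + a * y ^ 2 = 0) : x = 0 ∧ y = 0 := by
  by_cases hy : y = 0
  · subst hy
    exact ⟨pow_eq_zero_iff two_ne_zero |>.mp (by simpa using h), rfl⟩
  · exact absurd ⟨x / y, by field_simp; linear_combination -h⟩ hna

theorem isSquare_of_add_mul_eq_zero {i p q b : K} (hi : i ^ 2 = -1) (hq : q ≠ 0)
    (h : p + b * q = 0) (hpq : IsSquare (p * q)) : IsSquare b := by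
  have hb : b = -(p * q) / q ^ 2 := by
    field_simp
    linear_combination h
  rw [hb]
  exact (isSquare_neg_of_sq_eq_neg_one hi hpq).div (IsSquare.sq q)

theorem isSquare_mul_or_isSquare_mul_mul {a p q : K} (ha : a ≠ 0)
    (hp : IsSquare p ∨ IsSquare (a * p)) (hq : IsSquare q ∨ IsSquare (a * q)) :
    IsSquare (p * q) ∨ IsSquare (a * (p * q)) := by
  rcases hp with hp | hp <;> rcases hq with hq | hq
  · exact .inl (hp.mul hq)
  · exact .inr (by simpa only [mul_left_comm] using hp.mul hq)
  · exact .inr (by simpa only [mul_assoc] using hp.mul hq)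
  · refine .inl ?_
    have hpq : p * q = (a * p) * (a * q) / a ^ 2 := by field_simp
    rw [hpq]
    exact (hp.mul hq).div (IsSquare.sq a)

end SquareClasses

theorem pfister_anisotropic_of_rigid_general {K : Type*} [Field K]
    (i : K) (hi : i ^ 2 = -1)
    (hrigid : ∀ k : K, k ≠ 0 → ¬ IsSquare k →
      ∀ x y : K, x ^ 2 + k * y ^ 2 ≠ 0 →
        (∃ c : K, x ^ 2 + k * y ^ 2 = c ^ 2) ∨
        (∃ c : K, x ^ 2 + k * y ^ 2 = k * c ^ 2))
    (a b : K)
    (hna : ¬ IsSquare a) (hnb : ¬ IsSquare b) (hnab : ¬ IsSquare (a * b)) :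
    ∀ x y z w : K, x ^ 2 + a * y ^ 2 + b * z ^ 2 + a * b * w ^ 2 = 0 →
      x = 0 ∧ y = 0 ∧ z = 0 ∧ w = 0 := by
  intro x y z w h
  have ha : a ≠ 0 := by rintro rfl; exact hna ⟨0, by simp⟩
  have hb : b ≠ 0 := by rintro rfl; exact hnb ⟨0, by simp⟩
  have hna' : ¬ IsSquare (-a) := fun h => hna (by simpa using isSquare_neg_of_sq_eq_neg_one hi h)
  have hclass : ∀ u v : K, u ^ 2 + a * v ^ 2 ≠ 0 →
      IsSquare (u ^ 2 + a * v ^ 2) ∨ IsSquare (a * (u ^ 2 + a * v ^ 2)) := fun u v huv =>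
    (hrigid a ha hna u v huv).imp (fun ⟨c, hc⟩ => ⟨c, by rw [hc]; ring⟩)
      (fun ⟨c, hc⟩ => ⟨a * c, by rw [hc]; ring⟩)
  have hPQ : (x ^ 2 + a * y ^ 2) + b * (z ^ 2 + a * w ^ 2) = 0 := by linear_combination h
  by_cases hQ : z ^ 2 + a * w ^ 2 = 0
  · have hP : x ^ 2 + a * y ^ 2 = 0 := by simpa [hQ] using hPQ
    obtain ⟨hx, hy⟩ := eq_zero_and_eq_zero_of_sq_add_mul_sq_eq_zero hna' hP
    obtain ⟨hz, hw⟩ := eq_zero_and_eq_zero_of_sq_add_mul_sq_eq_zero hna' hQ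
    exact ⟨hx, hy, hz, hw⟩
  have hP : x ^ 2 + a * y ^ 2 ≠ 0 := by
    rw [eq_neg_of_add_eq_zero_left hPQ]
    exact neg_ne_zero.mpr (mul_ne_zero hb hQ)
  exfalso
  rcases isSquare_mul_or_isSquare_mul_mul ha (hclass x y hP) (hclass z w hQ) with hsq | hsq
  · exact hnb (isSquare_of_add_mul_eq_zero hi hQ hPQ hsq)
  · exact hnab (isSquare_of_add_mul_eq_zero (p := a * (x ^ 2 + a * y ^ 2)) hi hQ
      (by linear_combination a * hPQ) (by rwa [mul_assoc]))

/-- Let `K` be a rigid field containing a primitive 4th root of unity: for every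
non-square `k ∈ K*`, every nonzero value of the form `⟨1, k⟩` lies in the square class
of `1` or of `k`.  If `a, b ∈ K*` have square classes linearly independent over `𝔽₂`
(i.e. `a`, `b` and `a·b` are all non-squares), then the 2-fold Pfister form
`⟨⟨a, b⟩⟩ = ⟨1, a, b, a·b⟩` is anisotropic. -/
theorem pfister_anisotropic_of_rigid {K : Type*} [Field K]
    (h2 : (2 : K) ≠ 0) (i : K) (hi : i ^ 2 = -1)
    (hrigid : ∀ k : K, k ≠ 0 → ¬ IsSquare k →
      ∀ x y : K, x ^ 2 + k * y ^ 2 ≠ 0 →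
        (∃ c : K, x ^ 2 + k * y ^ 2 = c ^ 2) ∨
        (∃ c : K, x ^ 2 + k * y ^ 2 = k * c ^ 2))
    (a b : K) (ha : a ≠ 0) (hb : b ≠ 0)
    (hna : ¬ IsSquare a) (hnb : ¬ IsSquare b) (hnab : ¬ IsSquare (a * b)) :
    ∀ x y z w : K, x ^ 2 + a * y ^ 2 + b * z ^ 2 + a * b * w ^ 2 = 0 →
      x = 0 ∧ y = 0 ∧ z = 0 ∧ w = 0 :=
  pfister_anisotropic_of_rigid_general i hi hrigid a b hna hnb hnab
end
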